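/- arXiv:2002.06993 — 2 statements merged into one kernel-verified Lean document; each statement's English description precedes it below -/
import Mathlib

section
/- In a sequential composition of LBV instances, if generating a commit certificate in instance sq requires n − t commit-shares, each honest party contributes a commit-share in instance sq only after setting its lock to sq, and there are at most t byzantine parties out of n ≥ 3t+1 parties, then at least n − 2t honest parties have lock ≥ sq when starting instance sq + 1. -/
theorem commit_implies_locks {α : Type*} [DecidableEq α]
    (parties : Finset α) (n t : ℕ) (hn : parties.card = n) (hnt : 3 * t + 1 ≤ n)
    (B : Finset α) (hB : B ⊆ parties) (hBc : B.card ≤ t)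
    (sq : ℕ) (lock : α → ℕ)
    (Q : Finset α) (hQ : Q ⊆ parties) (hQc : n - t ≤ Q.card)
    (hlock : ∀ p ∈ Q, p ∉ B → sq ≤ lock p) :
    n - 2 * t ≤ ((parties \ B).filter fun p => sq ≤ lock p).card := by
  have hsub : Q \ B ⊆ (parties \ B).filter fun p => sq ≤ lock p := by
    intro p hp
    rw [Finset.mem_sdiff] at hp
    exact Finset.mem_filter.mpr ⟨Finset.mem_sdiff.mpr ⟨hQ hp.1, hp.2⟩, hlock p hp.1 hp.2⟩
  have h1 : Q.card - B.card ≤ (Q \ B).card := Finset.le_card_sdiff B Q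
  have h2 := Finset.card_le_card hsub
  have hQcard : Q.card ≤ n := hn ▸ Finset.card_le_card hQ
  omega
end

section
/- If at least n − 2t honest parties are locked on sequence number sq, honest locked parties only key-share a value v' at instance sq' > sq if they have seen a valid keyProof for v' from an instance ≥ sq, and no valid keyProof for a value other than v exists at instances in [sq, sq'], then any set of n − t key-shares at instance sq' must all be for value v (assuming n ≥ 3t+1 and at most t byzantine parties). -/
theorem keyshares_carry_committed_value {α V : Type*} [DecidableEq α]
    (parties : Finset α) (n t : ℕ) (hn : parties.card = n) (hnt : 3 * t + 1 ≤ n)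
    (B : Finset α) (hB : B ⊆ parties) (hBc : B.card ≤ t)
    (L : Finset α) (hL : L ⊆ parties) (hLB : Disjoint L B) (hLc : n - 2 * t ≤ L.card)
    (sq : ℕ) (v : V)
    (signs : α → V → Prop) (validKeyProof : V → ℕ → Prop)
    (hproofs : ∀ v' s, sq ≤ s → validKeyProof v' s → v' = v)
    (hshareOnlyWithProof : ∀ p ∈ L, ∀ v', signs p v' → ∃ s, sq ≤ s ∧ validKeyProof v' s) :
    ∀ (v' : V) (S : Finset α), S ⊆ parties → n - t ≤ S.card →
      (∀ p ∈ S, p ∉ B → signs p v') → v' = v := by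
  intro v' S hS hSc hSsigns
  have hunion : (S ∪ L).card ≤ n := by
    rw [← hn]; exact Finset.card_le_card (Finset.union_subset hS hL)
  have hiu := Finset.card_inter_add_card_union S L
  have hinter : 0 < (S ∩ L).card := by omega
  obtain ⟨p, hp⟩ := Finset.card_pos.mp hinter
  have hpS := Finset.mem_inter.mp hp |>.1
  have hpL := Finset.mem_inter.mp hp |>.2
  have hpB : p ∉ B := fun h => (Finset.disjoint_left.mp hLB hpL) h
  obtain ⟨s, hs, hv⟩ := hshareOnlyWithProof p hpL v' (hSsigns p hpS hpB)
  exact hproofs v' s hs hv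
end
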